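/- Let φ : ℝ^d → ℝ^d be an α_u-Lipschitz and α_l-coercive map with 0 < α_l ≤ α_u, and let f : ℝ^d → ℝ be differentiable, nonnegative, and L-smooth, with μ ≤ L. Fix w^{(0)}, set R = 2√(2L)·√(f(w^{(0)}))·α_u²/(α_l μ), let B̃ = {x ∈ ℝ^d : ‖φ(x) − φ(w^{(0)})‖ ≤ R}, and assume f is μ-PL* on B̃. Let (w^{(t)}) satisfy the GMD recursion φ(w^{(t+1)}) = φ(w^{(t)}) − η ∇f(w^{(t)}) with η = α_l/L. Then every iterate remains in the dual ball and the loss contracts: for all t, ‖φ(w^{(t)}) − φ(w^{(0)})‖ ≤ R and f(w^{(t+1)}) ≤ (1 − μα_l²/(Lα_u²)) f(w^{(t)}). -/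

import Mathlib

/-!
With step size `η = α_l / L`, coercivity of `φ` makes every GMD step `Δ = w⁺ - w` satisfy
`⟪∇f(w), Δ⟫ ≤ -L‖Δ‖²`, so the descent lemma for the `L`-smooth `f` gives
`f(w⁺) ≤ f(w) - (L/2)‖Δ‖²`. Lipschitzness of `φ` bounds the dual step `η‖∇f(w)‖` by `α_u‖Δ‖`,
and PL* at `w` then yields the contraction `f(w⁺) ≤ κ f(w)`, `κ = 1 - μα_l²/(Lα_u²)`.
On the other hand `‖∇f‖² ≤ 2L f` for a nonnegative `L`-smooth `f`, so while the iterates stay in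
the ball the dual steps decay geometrically with ratio `√κ`; their total length is at most
`η√(2L f(w⁰)) / (1 - √κ) ≤ R`, which closes the induction.
-/

section InnerProductSpace

variable {F : Type*} [NormedAddCommGroup F] [InnerProductSpace ℝ F] [CompleteSpace F]
  {φ : F → F} {f : F → ℝ} {αl αu L μ : ℝ} {w w' : F}

lemma hasDerivAt_comp_add_smul (hf : Differentiable ℝ f) (x v : F) (s : ℝ) :
    HasDerivAt (fun s : ℝ => f (x + s • v)) (inner ℝ (gradient f (x + s • v)) v) s := by
  have hline : HasDerivAt (fun s : ℝ => x + s • v) v s := by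
    simpa using ((hasDerivAt_id s).smul_const v).const_add x
  exact (hf _).hasGradientAt.hasFDerivAt.comp_hasDerivAt s hline

lemma descent_lemma (hf : Differentiable ℝ f)
    (hsmooth : ∀ x y, ‖gradient f x - gradient f y‖ ≤ L * ‖x - y‖) (x y : F) :
    f y ≤ f x + inner ℝ (gradient f x) (y - x) + L / 2 * ‖y - x‖ ^ 2 := by
  set v := y - x
  -- the gap between `f` and its quadratic upper model along the segment is antitone
  let g : ℝ → ℝ := fun s =>
    f (x + s • v) - s * inner ℝ (gradient f x) v - L / 2 * s ^ 2 * ‖v‖ ^ 2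
  have hg : ∀ s, HasDerivAt g
      (inner ℝ (gradient f (x + s • v) - gradient f x) v - L * s * ‖v‖ ^ 2) s := by
    intro s
    have := ((hasDerivAt_comp_add_smul hf x v s).sub
      ((hasDerivAt_id s).mul_const (inner ℝ (gradient f x) v))).sub
      (((hasDerivAt_pow 2 s).const_mul (L / 2)).mul_const (‖v‖ ^ 2))
    refine this.congr_deriv ?_
    rw [inner_sub_left]
    ring
  have hg_nonpos : ∀ s ∈ interior (Set.Ici (0 : ℝ)),
      inner ℝ (gradient f (x + s • v) - gradient f x) v - L * s * ‖v‖ ^ 2 ≤ 0 := by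
    intro s hs
    rw [interior_Ici, Set.mem_Ioi] at hs
    have hgrad : ‖gradient f (x + s • v) - gradient f x‖ ≤ L * (s * ‖v‖) := by
      simpa [norm_smul, abs_of_pos hs] using hsmooth (x + s • v) x
    refine sub_nonpos.2 ?_
    calc inner ℝ (gradient f (x + s • v) - gradient f x) v
        ≤ ‖gradient f (x + s • v) - gradient f x‖ * ‖v‖ := real_inner_le_norm _ _
      _ ≤ L * (s * ‖v‖) * ‖v‖ := by gcongr
      _ = L * s * ‖v‖ ^ 2 := by ring
  have hanti : AntitoneOn g (Set.Ici 0) :=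
    antitoneOn_of_hasDerivWithinAt_nonpos (convex_Ici 0)
      (fun s _ => (hg s).continuousAt.continuousWithinAt)
      (fun s _ => (hg s).hasDerivWithinAt) hg_nonpos
  have h10 : g 1 ≤ g 0 := hanti Set.self_mem_Ici (by norm_num) zero_le_one
  simp only [g, v, zero_smul, one_smul, add_zero, add_sub_cancel] at h10
  linarith

lemma norm_gradient_sq_le (hf : Differentiable ℝ f) (hL : 0 < L) (hnonneg : ∀ x, 0 ≤ f x)
    (hsmooth : ∀ x y, ‖gradient f x - gradient f y‖ ≤ L * ‖x - y‖) (x : F) :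
    ‖gradient f x‖ ^ 2 ≤ 2 * L * f x := by
  set g := gradient f x
  -- one gradient step of length `1 / L` cannot push `f` below zero
  have h := descent_lemma hf hsmooth x (x - L⁻¹ • g)
  rw [sub_sub_cancel_left, inner_neg_right, real_inner_smul_right, real_inner_self_eq_norm_sq,
    norm_neg, norm_smul, Real.norm_of_nonneg (inv_nonneg.2 hL.le)] at h
  have := hnonneg (x - L⁻¹ • g)
  have hmodel : f x + -(L⁻¹ * ‖g‖ ^ 2) + L / 2 * (L⁻¹ * ‖g‖) ^ 2
      = f x - ‖g‖ ^ 2 / (2 * L) := by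
    field_simp; ring
  rw [hmodel] at h
  have : ‖g‖ ^ 2 / (2 * L) ≤ f x := by linarith
  rwa [div_le_iff₀ (by positivity), mul_comm] at this

lemma gmd_step_descent (hαl : 0 < αl) (hL : 0 < L)
    (hcoer : ∀ x y, αl * ‖x - y‖ ^ 2 ≤ inner ℝ (φ x - φ y) (x - y))
    (hf : Differentiable ℝ f) (hsmooth : ∀ x y, ‖gradient f x - gradient f y‖ ≤ L * ‖x - y‖)
    (hstep : φ w' = φ w - (αl / L) • gradient f w) :
    f w' ≤ f w - L / 2 * ‖w' - w‖ ^ 2 := by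
  have hinner : inner ℝ (gradient f w) (w' - w) ≤ -(L * ‖w' - w‖ ^ 2) := by
    have h := hcoer w' w
    rw [hstep, sub_sub_cancel_left, inner_neg_left, real_inner_smul_left] at h
    have h' :
        αl / L * (L * ‖w' - w‖ ^ 2) ≤ αl / L * -inner ℝ (gradient f w) (w' - w) := by
      rw [← mul_assoc, div_mul_cancel₀ _ hL.ne']; linarith
    linarith [le_of_mul_le_mul_left h' (div_pos hαl hL)]
  linarith [descent_lemma hf hsmooth w w']

lemma gmd_step_contraction (hαl : 0 < αl) (hαu : 0 < αu) (hL : 0 < L)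
    (hlip : ∀ x y, ‖φ x - φ y‖ ≤ αu * ‖x - y‖)
    (hcoer : ∀ x y, αl * ‖x - y‖ ^ 2 ≤ inner ℝ (φ x - φ y) (x - y))
    (hf : Differentiable ℝ f) (hsmooth : ∀ x y, ‖gradient f x - gradient f y‖ ≤ L * ‖x - y‖)
    (hPL : μ * f w ≤ 1 / 2 * ‖gradient f w‖ ^ 2)
    (hstep : φ w' = φ w - (αl / L) • gradient f w) :
    f w' ≤ (1 - μ * αl ^ 2 / (L * αu ^ 2)) * f w := by
  have hdesc := gmd_step_descent hαl hL hcoer hf hsmooth hstep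
  have hdual : αl / L * ‖gradient f w‖ ≤ αu * ‖w' - w‖ := by
    have h := hlip w' w
    rwa [hstep, sub_sub_cancel_left, norm_neg, norm_smul,
      Real.norm_of_nonneg (div_pos hαl hL).le] at h
  -- the dual step is at most `αu` times the primal step, and PL bounds it from below
  have hsq : 2 * μ * f w * (αl / L) ^ 2 ≤ αu ^ 2 * ‖w' - w‖ ^ 2 := by
    calc 2 * μ * f w * (αl / L) ^ 2 ≤ (αl / L * ‖gradient f w‖) ^ 2 := by
          rw [mul_pow, mul_comm ((αl / L) ^ 2)]; gcongr; linarith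
      _ ≤ (αu * ‖w' - w‖) ^ 2 := by gcongr
      _ = αu ^ 2 * ‖w' - w‖ ^ 2 := mul_pow _ _ _
  have hgain : μ * αl ^ 2 / (L * αu ^ 2) * f w ≤ L / 2 * ‖w' - w‖ ^ 2 := by
    rw [div_mul_eq_mul_div, div_le_iff₀ (by positivity)]
    rw [div_pow, ← mul_div_assoc, div_le_iff₀ (by positivity)] at hsq
    nlinarith
  linarith

lemma gmd_dual_step_norm_le (hαl : 0 < αl) (hL : 0 < L) (hf : Differentiable ℝ f)
    (hnonneg : ∀ x, 0 ≤ f x) (hsmooth : ∀ x y, ‖gradient f x - gradient f y‖ ≤ L * ‖x - y‖)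
    (hstep : φ w' = φ w - (αl / L) • gradient f w) :
    ‖φ w' - φ w‖ ≤ αl / L * √(2 * L) * √(f w) := by
  have hgrad : ‖gradient f w‖ ≤ √(2 * L) * √(f w) := by
    rw [← Real.sqrt_mul (by positivity)]
    exact Real.le_sqrt_of_sq_le (norm_gradient_sq_le hf hL hnonneg hsmooth w)
  rw [hstep, sub_sub_cancel_left, norm_neg, norm_smul, Real.norm_of_nonneg (div_pos hαl hL).le,
    mul_assoc]
  gcongr

end InnerProductSpace

lemma half_le_one_sub_sqrt_one_sub {c : ℝ} (hc : c ≤ 1) : c / 2 ≤ 1 - √(1 - c) := by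
  nlinarith [Real.sq_sqrt (sub_nonneg.2 hc), sq_nonneg (1 - √(1 - c))]

lemma norm_sub_le_of_geometric_steps {E : Type*} [SeminormedAddCommGroup E]
    (x : ℕ → E) (v : ℕ → ℝ) {K r R : ℝ} (hK : 0 ≤ K) (hr₀ : 0 ≤ r) (hr₁ : r < 1)
    (hv : 0 ≤ v 0)
    (hR : K * v 0 ≤ (1 - r) * R) (hstep : ∀ t, ‖x (t + 1) - x t‖ ≤ K * v t)
    (hcontract : ∀ t, ‖x t - x 0‖ ≤ R → v (t + 1) ≤ r * v t) (t : ℕ) :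
    ‖x t - x 0‖ ≤ R := by
  have hsum : ∀ t, K * v 0 * ∑ s ∈ Finset.range t, r ^ s ≤ R := fun t => by
    have := geom_sum_Ico_le_of_lt_one (m := 0) (n := t) hr₀ hr₁
    rw [← Finset.range_eq_Ico, pow_zero] at this
    calc K * v 0 * ∑ s ∈ Finset.range t, r ^ s ≤ K * v 0 * (1 / (1 - r)) := by gcongr
      _ ≤ R := by rw [mul_one_div, div_le_iff₀ (by linarith)]; linarith
  suffices h : ∀ t,
      ‖x t - x 0‖ ≤ K * v 0 * ∑ s ∈ Finset.range t, r ^ s ∧ v t ≤ r ^ t * v 0 from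
    (h t).1.trans (hsum t)
  intro t
  induction t with
  | zero => simp
  | succ t ih =>
    obtain ⟨hdist, hv_t⟩ := ih
    refine ⟨?_, ?_⟩
    · calc ‖x (t + 1) - x 0‖ ≤ ‖x (t + 1) - x t‖ + ‖x t - x 0‖ :=
            norm_sub_le_norm_sub_add_norm_sub _ _ _
        _ ≤ K * (r ^ t * v 0) + K * v 0 * ∑ s ∈ Finset.range t, r ^ s := by
          gcongr
          exact (hstep t).trans (mul_le_mul_of_nonneg_left hv_t hK)
        _ = K * v 0 * ∑ s ∈ Finset.range (t + 1), r ^ s := by rw [Finset.sum_range_succ]; ring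
    · calc v (t + 1) ≤ r * v t := hcontract t (hdist.trans (hsum t))
        _ ≤ r * (r ^ t * v 0) := by gcongr
        _ = r ^ (t + 1) * v 0 := by ring

/-- Under the hypotheses of the local convergence theorem for GMD
(`φ` `α_u`-Lipschitz and `α_l`-coercive, `f` nonnegative, `L`-smooth and `μ`-PL* on the
dual ball of radius `R = 2√(2L)√(f(w⁰))α_u²/(α_l μ)` around `φ(w⁰)`), the GMD iterates
with step size `η = α_l/L` remain in the dual ball and the loss contracts by the factor
`1 - μα_l²/(Lα_u²)` at every step. -/
theorem gmd_iterates_stay_in_ball {d : ℕ}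
    (φ : EuclideanSpace ℝ (Fin d) → EuclideanSpace ℝ (Fin d))
    (αl αu : ℝ) (hαl : 0 < αl) (hαlu : αl ≤ αu)
    (hlip : ∀ x y, ‖φ x - φ y‖ ≤ αu * ‖x - y‖)
    (hcoer : ∀ x y, αl * ‖x - y‖ ^ 2 ≤ (inner ℝ (φ x - φ y) (x - y) : ℝ))
    (f : EuclideanSpace ℝ (Fin d) → ℝ) (L μ : ℝ)
    (hL : 0 < L) (hμ : 0 < μ) (hμL : μ ≤ L)
    (hdiff : Differentiable ℝ f)
    (hnonneg : ∀ x, 0 ≤ f x)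
    (hsmooth : ∀ x y, ‖gradient f x - gradient f y‖ ≤ L * ‖x - y‖)
    (w : ℕ → EuclideanSpace ℝ (Fin d))
    (R : ℝ) (hR : R = 2 * Real.sqrt (2 * L) * Real.sqrt (f (w 0)) * αu ^ 2 / (αl * μ))
    (hPL : ∀ x ∈ {x : EuclideanSpace ℝ (Fin d) | ‖φ x - φ (w 0)‖ ≤ R},
      μ * f x ≤ (1 / 2) * ‖gradient f x‖ ^ 2)
    (hstep : ∀ t, φ (w (t + 1)) = φ (w t) - (αl / L) • gradient f (w t)) :
    ∀ t, ‖φ (w t) - φ (w 0)‖ ≤ R ∧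
      f (w (t + 1)) ≤ (1 - μ * αl ^ 2 / (L * αu ^ 2)) * f (w t) := by
  have hαu : 0 < αu := hαl.trans_le hαlu
  set c := μ * αl ^ 2 / (L * αu ^ 2) with hc
  have hc₀ : 0 < c := by positivity
  have hc₁ : c ≤ 1 := by rw [hc, div_le_one (by positivity)]; gcongr
  have hgap := half_le_one_sub_sqrt_one_sub hc₁
  have hcontract : ∀ t, ‖φ (w t) - φ (w 0)‖ ≤ R → f (w (t + 1)) ≤ (1 - c) * f (w t) :=
    fun t hball =>
      gmd_step_contraction hαl hαu hL hlip hcoer hdiff hsmooth (hPL _ hball) (hstep t)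
  have hball : ∀ t, ‖φ (w t) - φ (w 0)‖ ≤ R := by
    refine norm_sub_le_of_geometric_steps (fun t => φ (w t)) (fun t => √(f (w t)))
      (K := αl / L * √(2 * L)) (by positivity) (Real.sqrt_nonneg _) (by linarith)
      (Real.sqrt_nonneg _) ?_
      (fun t => gmd_dual_step_norm_le hαl hL hdiff hnonneg hsmooth (hstep t)) fun t hball => ?_
    · have hR₀ : 0 ≤ R := by rw [hR]; positivity
      calc αl / L * √(2 * L) * √(f (w 0)) = c / 2 * R := by rw [hR, hc]; field_simp
        _ ≤ (1 - √(1 - c)) * R := by gcongr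
    · rw [← Real.sqrt_mul (by linarith)]
      exact Real.sqrt_le_sqrt (hcontract t hball)
  exact fun t => ⟨hball t, hcontract t (hball t)⟩
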